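/- arXiv:2007.13906 — 4 statements merged into one kernel-verified Lean document; each statement's English description precedes it below -/
import Mathlib

section
/- Let r ∈ (0, 1/2) and s ∈ (1/2, 1) be real numbers, and consider the vectors u = (r − 1, −s) and v = (1 − r, −s) in the Euclidean plane ℝ². Then the cosine of the angle between u and v equals (s² − (1 − r)²)/((1 − r)² + s²), i.e. ⟨u, v⟩/(‖u‖·‖v‖) = (s² − (1 − r)²)/((1 − r)² + s²), and this value lies strictly between −3/5 and 3/5. -/
open RealInnerProductSpace

/-- The vector `(a, b)` in the Euclidean plane `ℝ²`. -/
noncomputable def vec2 (a b : ℝ) : EuclideanSpace ℝ (Fin 2) :=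
  (WithLp.equiv 2 (Fin 2 → ℝ)).symm ![a, b]

/-- For `r ∈ (0, 1/2)` and `s ∈ (1/2, 1)`, the cosine of the angle between
`u = (r − 1, −s)` and `v = (1 − r, −s)` equals `(s² − (1 − r)²)/((1 − r)² + s²)`,
and this value lies strictly between `−3/5` and `3/5`. -/
theorem stmt0 (r s : ℝ) (hr : r ∈ Set.Ioo (0 : ℝ) (1 / 2))
    (hs : s ∈ Set.Ioo (1 / 2 : ℝ) 1)
    (u v : EuclideanSpace ℝ (Fin 2))
    (hu : u = vec2 (r - 1) (-s)) (hv : v = vec2 (1 - r) (-s)) :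
    ⟪u, v⟫ / (‖u‖ * ‖v‖) = (s ^ 2 - (1 - r) ^ 2) / ((1 - r) ^ 2 + s ^ 2) ∧
    -(3 / 5) < (s ^ 2 - (1 - r) ^ 2) / ((1 - r) ^ 2 + s ^ 2) ∧
    (s ^ 2 - (1 - r) ^ 2) / ((1 - r) ^ 2 + s ^ 2) < 3 / 5 := by
  obtain ⟨hr0, hr1⟩ := hr
  obtain ⟨hs0, hs1⟩ := hs
  have hiv : ⟪u, v⟫ = s ^ 2 - (1 - r) ^ 2 := by
    simp [hu, hv, vec2, PiLp.inner_apply, Fin.sum_univ_two]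
    ring
  have hsq : (0:ℝ) ≤ (1 - r) ^ 2 + s ^ 2 := by positivity
  have hnu : ‖u‖ = Real.sqrt ((1 - r) ^ 2 + s ^ 2) := by
    rw [hu, EuclideanSpace.norm_eq]
    congr 1
    simp [vec2, Fin.sum_univ_two, sq_abs]
    ring
  have hnv : ‖v‖ = Real.sqrt ((1 - r) ^ 2 + s ^ 2) := by
    rw [hv, EuclideanSpace.norm_eq]
    congr 1
    simp [vec2, Fin.sum_univ_two, sq_abs]
  have hmul : ‖u‖ * ‖v‖ = (1 - r) ^ 2 + s ^ 2 := by
    rw [hnu, hnv, Real.mul_self_sqrt hsq]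
  have hpos : (0:ℝ) < (1 - r) ^ 2 + s ^ 2 := by nlinarith
  refine ⟨by rw [hiv, hmul], ?_, ?_⟩
  · rw [lt_div_iff₀ hpos]
    nlinarith
  · rw [div_lt_iff₀ hpos]
    nlinarith
end

section
/- Let r ∈ (0, 1/2) and s ∈ (1/2, 1) be real numbers, and consider the vectors u = (r − 1, −s) and v = (1 − r, −s) in the Euclidean plane ℝ². Then the angle between u and v lies strictly between arccos(3/5) and arccos(−3/5); in particular it is strictly less than 3π/4 (i.e. 135°). -/
open Real InnerProductGeometry

lemma inner_vec2 (a b c d : ℝ) : inner ℝ (vec2 a b) (vec2 c d) = a * c + b * d := by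
  simp [vec2, PiLp.inner_apply, Fin.sum_univ_two, mul_comm]

lemma norm_vec2 (a b : ℝ) : ‖vec2 a b‖ = √(a ^ 2 + b ^ 2) := by
  simp [vec2, EuclideanSpace.norm_eq, Fin.sum_univ_two, sq_abs]

lemma angle_vec2_neg_vec2 (a b : ℝ) :
    angle (vec2 (-a) b) (vec2 a b) = arccos ((b ^ 2 - a ^ 2) / (a ^ 2 + b ^ 2)) := by
  rw [angle, inner_vec2, norm_vec2, norm_vec2, neg_sq,
    mul_self_sqrt (by positivity : (0 : ℝ) ≤ a ^ 2 + b ^ 2)]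
  ring_nf

lemma abs_sq_sub_sq_div_lt {a b : ℝ} (hab : a < 2 * b) (hba : b < 2 * a) :
    |(b ^ 2 - a ^ 2) / (a ^ 2 + b ^ 2)| < 3 / 5 := by
  have hden : 0 < a ^ 2 + b ^ 2 := by nlinarith
  rw [abs_div, abs_of_pos hden, div_lt_iff₀ hden, abs_lt]
  constructor <;> nlinarith

lemma arccos_mem_Ioo_of_abs_lt {x c : ℝ} (hc : c ≤ 1) (hx : |x| < c) :
    arccos c < arccos x ∧ arccos x < arccos (-c) := by
  obtain ⟨hlow, hhigh⟩ := abs_lt.1 hx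
  exact ⟨arccos_lt_arccos (by linarith) hhigh hc, arccos_lt_arccos (by linarith) hlow (by linarith)⟩

lemma arccos_lt_three_pi_div_four {x : ℝ} (hx : -(√2 / 2) < x) : arccos x < 3 * π / 4 := by
  have hsqrt : √2 < 2 := by
    rw [sqrt_lt' two_pos]
    norm_num
  calc arccos x ≤ arccos (min x 1) := arccos_le_arccos (min_le_left x 1)
    _ < arccos (-(√2 / 2)) :=
      arccos_lt_arccos (by linarith) (lt_min hx (by linarith [sqrt_nonneg 2])) (min_le_right x 1)
    _ = 3 * π / 4 := by
      rw [arccos_neg, ← cos_pi_div_four, arccos_cos (by positivity) (by linarith [pi_pos])]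
      ring

/-- For `r ∈ (0, 1/2)` and `s ∈ (1/2, 1)`, the angle between `u = (r − 1, −s)` and
`v = (1 − r, −s)` lies strictly between `arccos(3/5)` and `arccos(−3/5)`;
in particular it is strictly less than `3π/4`. -/
theorem stmt1 (r s : ℝ) (hr : r ∈ Set.Ioo (0 : ℝ) (1 / 2))
    (hs : s ∈ Set.Ioo (1 / 2 : ℝ) 1)
    (u v : EuclideanSpace ℝ (Fin 2))
    (hu : u = vec2 (r - 1) (-s)) (hv : v = vec2 (1 - r) (-s)) :
    Real.arccos (3 / 5) < InnerProductGeometry.angle u v ∧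
    InnerProductGeometry.angle u v < Real.arccos (-(3 / 5)) ∧
    InnerProductGeometry.angle u v < 3 * Real.pi / 4 := by
  obtain ⟨hr0, hr1⟩ := hr
  obtain ⟨hs0, hs1⟩ := hs
  have hangle : angle u v = arccos ((s ^ 2 - (1 - r) ^ 2) / ((1 - r) ^ 2 + s ^ 2)) := by
    rw [hu, hv, ← neg_sub, angle_vec2_neg_vec2, neg_sq]
  have hcos := abs_sq_sub_sq_div_lt (a := 1 - r) (b := s) (by linarith) (by linarith)
  obtain ⟨hlow, hhigh⟩ := arccos_mem_Ioo_of_abs_lt (by norm_num) hcos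
  have hsqrt : 3 / 5 < √2 / 2 := by
    have := lt_sqrt_of_sq_lt (show (6 / 5 : ℝ) ^ 2 < 2 by norm_num)
    linarith
  rw [hangle]
  exact ⟨hlow, hhigh, arccos_lt_three_pi_div_four (by linarith [(abs_lt.1 hcos).1])⟩
end

section
/- For all real numbers t, w with −1/2 < t < 1/2 and −1/2 < w < 1/2, one has (t + w)/(√(1 + t²)·√(1 + w²)) < 4/5. -/
/-- For all real `t, w` with `−1/2 < t < 1/2` and `−1/2 < w < 1/2`, one has
`(t + w)/(√(1 + t²)·√(1 + w²)) < 4/5`. -/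
theorem stmt6 (t w : ℝ) (ht : -(1 / 2) < t) (ht' : t < 1 / 2)
    (hw : -(1 / 2) < w) (hw' : w < 1 / 2) :
    (t + w) / (Real.sqrt (1 + t ^ 2) * Real.sqrt (1 + w ^ 2)) < 4 / 5 := by
  have h1 : (0:ℝ) < Real.sqrt (1 + t ^ 2) := Real.sqrt_pos.2 (by positivity)
  have h2 : (0:ℝ) < Real.sqrt (1 + w ^ 2) := Real.sqrt_pos.2 (by positivity)
  have hd : 0 < Real.sqrt (1 + t ^ 2) * Real.sqrt (1 + w ^ 2) := mul_pos h1 h2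
  rw [div_lt_iff₀ hd]
  rcases le_or_gt (t + w) 0 with h | h
  · nlinarith [Real.sq_sqrt (show (0:ℝ) ≤ 1 + t^2 by positivity),
      Real.sq_sqrt (show (0:ℝ) ≤ 1 + w^2 by positivity), sq_nonneg (Real.sqrt (1+t^2) - Real.sqrt (1+w^2))]
  · have key : (t + w)^2 < (4/5 * (Real.sqrt (1 + t ^ 2) * Real.sqrt (1 + w ^ 2)))^2 := by
      have e1 := Real.sq_sqrt (show (0:ℝ) ≤ 1 + t^2 by positivity)
      have e2 := Real.sq_sqrt (show (0:ℝ) ≤ 1 + w^2 by positivity)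
      have : (4/5 * (Real.sqrt (1 + t ^ 2) * Real.sqrt (1 + w ^ 2)))^2
          = 16/25 * ((1+t^2)*(1+w^2)) := by ring_nf; nlinarith [e1, e2]
      rw [this]
      nlinarith [mul_pos (sub_pos.2 ht') (sub_pos.2 hw'), sq_nonneg (t - w), sq_nonneg (t*w), sq_nonneg (t+w)]
    have := abs_lt_of_sq_lt_sq key (by positivity)
    calc t + w ≤ |t + w| := le_abs_self _
      _ < 4/5 * (Real.sqrt (1 + t ^ 2) * Real.sqrt (1 + w ^ 2)) := this
end

section
/- For all real numbers t, w with 0 < t < 1/2 and −1/2 < w < 1/2, one has (t + w)/(√(1 + t²)·√(1 + w²)) > −1/√5. -/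
/-- For all real `t, w` with `0 < t < 1/2` and `−1/2 < w < 1/2`, one has
`(t + w)/(√(1 + t²)·√(1 + w²)) > −1/√5`. -/
theorem stmt7 (t w : ℝ) (ht : 0 < t) (ht' : t < 1 / 2)
    (hw : -(1 / 2) < w) (hw' : w < 1 / 2) :
    -(1 / Real.sqrt 5) < (t + w) / (Real.sqrt (1 + t ^ 2) * Real.sqrt (1 + w ^ 2)) := by
  have ha : (0:ℝ) < Real.sqrt (1 + t ^ 2) := Real.sqrt_pos.2 (by nlinarith)
  have hb : (0:ℝ) < Real.sqrt (1 + w ^ 2) := Real.sqrt_pos.2 (by nlinarith)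
  have hs : (0:ℝ) < Real.sqrt 5 := Real.sqrt_pos.2 (by norm_num)
  rcases le_or_gt 0 (t + w) with h | h
  · have h1 : 0 ≤ (t + w) / (Real.sqrt (1 + t ^ 2) * Real.sqrt (1 + w ^ 2)) :=
      div_nonneg h (le_of_lt (mul_pos ha hb))
    have h2 : (0:ℝ) < 1 / Real.sqrt 5 := by positivity
    linarith
  · have ha2 : Real.sqrt (1 + t ^ 2) ^ 2 = 1 + t ^ 2 := Real.sq_sqrt (by nlinarith)
    have hb2 : Real.sqrt (1 + w ^ 2) ^ 2 = 1 + w ^ 2 := Real.sq_sqrt (by nlinarith)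
    have hs2 : Real.sqrt 5 ^ 2 = 5 := Real.sq_sqrt (by norm_num)
    have hw0 : w < 0 := by linarith
    have key : 5 * (t + w) ^ 2 < (1 + t ^ 2) * (1 + w ^ 2) := by
      have h1 : (t + w) ^ 2 < w ^ 2 := by nlinarith
      nlinarith [sq_nonneg t, sq_nonneg w, sq_nonneg (t*w)]
    have hmain : -(Real.sqrt (1 + t ^ 2) * Real.sqrt (1 + w ^ 2)) < Real.sqrt 5 * (t + w) := by
      nlinarith [mul_pos ha hb, mul_pos hs (neg_pos.2 h), sq_nonneg (Real.sqrt (1 + t ^ 2) * Real.sqrt (1 + w ^ 2) + Real.sqrt 5 * (t + w))]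
    have hinv : 1 / Real.sqrt 5 * Real.sqrt 5 = 1 := by field_simp
    have h2 : -(1 / Real.sqrt 5) * (Real.sqrt (1 + t ^ 2) * Real.sqrt (1 + w ^ 2)) < t + w := by
      have h3 := mul_lt_mul_of_pos_left hmain (by positivity : (0:ℝ) < 1 / Real.sqrt 5)
      nlinarith [h3, hinv]
    exact (lt_div_iff₀ (mul_pos ha hb)).2 h2
end
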